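/- arXiv:0810.3724 — 3 statements merged into one kernel-verified Lean document; each statement's English description precedes it below -/
import Mathlib

section
/- With the same setting (U ∈ ℝ^{N×K} with orthonormal columns, partition into clusters I_1,…,I_K, centers c⁽ᵏ⁾, total variation TV(U)), it holds that Σ_{1≤k<ℓ≤K} N_k N_ℓ ⟨c⁽ᵏ⁾, c⁽ℓ⁾⟩² ≤ TV(U). -/
open Matrix Finset

/-!
Let `P = U Uᵀ`; since `P` is the orthogonal projection onto the column space of `U`,
`∑_{i,i'} P_{ii'}² = trace P = K`. The sum of `P` over the block `I_k × I_ℓ` is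
`N_k N_ℓ ⟨c⁽ᵏ⁾, c⁽ℓ⁾⟩`, so Cauchy–Schwarz on each block gives
`∑_{k,ℓ} N_k N_ℓ ⟨c⁽ᵏ⁾, c⁽ℓ⁾⟩² ≤ K`. Writing `x_k = N_k ‖c⁽ᵏ⁾‖²`, the diagonal terms are `x_k²`
and `TV(U) = K - ∑ x_k`, so twice the claimed sum is at most
`K - ∑ x_k² ≤ 2 (K - ∑ x_k)`, the last step being `∑ (x_k - 1)² ≥ 0`.
-/

lemma Finset.sum_sum_eq_sum_add_two_nsmul_sum_lt {α M : Type*} [Fintype α] [LinearOrder α]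
    [AddCommMonoid M] (f : α → α → M) (hf : ∀ a b, f a b = f b a) :
    ∑ a, ∑ b, f a b
      = ∑ a, f a a + 2 • ∑ p ∈ univ.filter (fun p : α × α => p.1 < p.2), f p.1 p.2 := by
  have split : ∀ a b, f a b = ((if a < b then f a b else 0) + if a = b then f a b else 0)
      + if b < a then f a b else 0 := by
    intro a b
    rcases lt_trichotomy a b with h | rfl | h
    · simp [h, h.ne, h.not_gt]
    · simp
    · simp [h, h.ne', h.not_gt]
  have upper : ∑ a, ∑ b, (if a < b then f a b else 0)
      = ∑ p ∈ univ.filter (fun p : α × α => p.1 < p.2), f p.1 p.2 := by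
    rw [sum_filter, ← univ_product_univ, sum_product]
  have lower : ∑ a, ∑ b, (if b < a then f a b else 0)
      = ∑ a, ∑ b, (if a < b then f a b else 0) := by
    rw [sum_comm]
    simp_rw [hf]
  rw [sum_congr rfl fun a _ => sum_congr rfl fun b _ => split a b]
  simp only [sum_add_distrib, lower, upper, sum_ite_eq, mem_univ, if_true]
  rw [two_nsmul]
  abel

section RowMean

variable {m n : Type*}

-- For `s = ∅` the division by zero gives `0`, and the identities below still hold.
noncomputable def rowMean (U : Matrix m n ℝ) (s : Finset m) (j : n) : ℝ :=
  (∑ i ∈ s, U i j) / #s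

lemma sum_eq_card_mul_rowMean (U : Matrix m n ℝ) (s : Finset m) (j : n) :
    ∑ i ∈ s, U i j = #s * rowMean U s j := by
  rcases s.eq_empty_or_nonempty with rfl | hs
  · simp
  · rw [rowMean, mul_div_cancel₀]
    exact_mod_cast hs.card_pos.ne'

variable [Fintype n]

lemma sum_sum_sq_sub_rowMean (U : Matrix m n ℝ) (s : Finset m) :
    ∑ i ∈ s, ∑ j, (U i j - rowMean U s j) ^ 2
      = ∑ i ∈ s, ∑ j, U i j ^ 2 - #s * ∑ j, rowMean U s j ^ 2 := by
  rw [sum_comm, sum_comm (s := s), mul_sum, ← sum_sub_distrib]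
  refine sum_congr rfl fun j _ => ?_
  simp only [sub_sq, sum_add_distrib, sum_sub_distrib, sum_const, nsmul_eq_mul, mul_assoc,
    ← mul_sum, ← sum_mul, sum_eq_card_mul_rowMean U s j]
  ring

lemma card_mul_card_mul_sq_sum_rowMean_mul_le (U : Matrix m n ℝ) (s t : Finset m) :
    #s * #t * (∑ j, rowMean U s j * rowMean U t j) ^ 2
      ≤ ∑ i ∈ s, ∑ i' ∈ t, (U * Uᵀ) i i' ^ 2 := by
  set a : ℝ := #s * #t
  have block : ∑ i ∈ s, ∑ i' ∈ t, (U * Uᵀ) i i' = a * ∑ j, rowMean U s j * rowMean U t j := by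
    calc ∑ i ∈ s, ∑ i' ∈ t, (U * Uᵀ) i i' = ∑ j, (∑ i ∈ s, U i j) * ∑ i' ∈ t, U i' j := by
          simp only [mul_apply, transpose_apply, sum_mul_sum]
          conv_rhs => rw [sum_comm]
          exact sum_congr rfl fun _ _ => sum_comm
      _ = a * ∑ j, rowMean U s j * rowMean U t j := by
          rw [mul_sum]
          refine sum_congr rfl fun j _ => ?_
          rw [sum_eq_card_mul_rowMean U s, sum_eq_card_mul_rowMean U t]
          ring
  have cauchySchwarz : (∑ i ∈ s, ∑ i' ∈ t, (U * Uᵀ) i i') ^ 2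
      ≤ a * ∑ i ∈ s, ∑ i' ∈ t, (U * Uᵀ) i i' ^ 2 := by
    have h := sq_sum_le_card_mul_sum_sq (s := s ×ˢ t) (f := fun p => (U * Uᵀ) p.1 p.2)
    rwa [sum_product, sum_product, card_product, Nat.cast_mul] at h
  rw [block] at cauchySchwarz
  rcases (by positivity : 0 ≤ a).eq_or_lt with ha | ha
  · rw [← ha, zero_mul]
    positivity
  · exact le_of_mul_le_mul_left (by linarith) ha

end RowMean

section Orthonormal

variable {m n : Type*} [Fintype m] [Fintype n]

lemma sum_sum_sq_eq_trace_transpose_mul (A : Matrix m n ℝ) :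
    ∑ i, ∑ j, A i j ^ 2 = trace (Aᵀ * A) := by
  rw [sum_comm]
  simp [trace, mul_apply, sq]

variable [DecidableEq n] {U : Matrix m n ℝ}

lemma sum_sum_sq_of_transpose_mul_self (hU : Uᵀ * U = 1) :
    ∑ i, ∑ j, U i j ^ 2 = Fintype.card n := by
  rw [sum_sum_sq_eq_trace_transpose_mul, hU, trace_one]

lemma sum_sum_sq_mul_transpose_of_transpose_mul_self (hU : Uᵀ * U = 1) :
    ∑ i, ∑ i', (U * Uᵀ) i i' ^ 2 = Fintype.card n := by
  have idempotent : (U * Uᵀ)ᵀ * (U * Uᵀ) = U * Uᵀ := by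
    rw [transpose_mul, transpose_transpose, Matrix.mul_assoc, ← Matrix.mul_assoc Uᵀ, hU,
      Matrix.one_mul]
  rw [sum_sum_sq_eq_trace_transpose_mul, idempotent, trace_mul_comm, hU, trace_one]

end Orthonormal

section Clusters

variable {m n κ : Type*} [Fintype m] [Fintype n] [DecidableEq n] [Fintype κ] [DecidableEq κ]
  {U : Matrix m n ℝ} (cl : m → κ)

lemma sum_sum_card_mul_card_mul_sq_sum_rowMean_mul_le (hU : Uᵀ * U = 1) :
    ∑ k, ∑ l, (#{i | cl i = k} : ℝ) * #{i | cl i = l}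
        * (∑ j, rowMean U {i | cl i = k} j * rowMean U {i | cl i = l} j) ^ 2
      ≤ Fintype.card n := by
  calc _ ≤ ∑ k, ∑ l, ∑ i ∈ {i | cl i = k}, ∑ i' ∈ {i | cl i = l}, (U * Uᵀ) i i' ^ 2 := by
        gcongr with k _ l _
        exact card_mul_card_mul_sq_sum_rowMean_mul_le U _ _
    _ = ∑ i, ∑ i', (U * Uᵀ) i i' ^ 2 := by
        simp_rw [sum_comm (s := univ) (t := {i | cl i = _}), sum_fiberwise]
    _ = Fintype.card n := sum_sum_sq_mul_transpose_of_transpose_mul_self hU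

lemma sum_sum_sum_sq_sub_rowMean (hU : Uᵀ * U = 1) :
    ∑ k, ∑ i ∈ {i | cl i = k}, ∑ j, (U i j - rowMean U {i | cl i = k} j) ^ 2
      = Fintype.card n - ∑ k, (#{i | cl i = k} : ℝ) * ∑ j, rowMean U {i | cl i = k} j ^ 2 := by
  simp_rw [sum_sum_sq_sub_rowMean, sum_sub_distrib, sum_fiberwise,
    sum_sum_sq_of_transpose_mul_self hU]

end Clusters

theorem stmt4_general (N K : ℕ) (U : Matrix (Fin N) (Fin K) ℝ) (hU : Uᵀ * U = 1)
    (cl : Fin N → Fin K)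
    (Nk : Fin K → ℝ) (hNk : ∀ k, Nk k = ((univ.filter (fun i => cl i = k)).card : ℝ))
    (c : Fin K → Fin K → ℝ)
    (hc : ∀ k j, c k j = (∑ i ∈ univ.filter (fun i => cl i = k), U i j) / Nk k)
    (TV : ℝ)
    (hTV : TV = ∑ k, ∑ i ∈ univ.filter (fun i => cl i = k), ∑ j, (U i j - c k j) ^ 2) :
    ∑ p ∈ univ.filter (fun p : Fin K × Fin K => p.1 < p.2),
      Nk p.1 * Nk p.2 * (∑ j, c p.1 j * c p.2 j) ^ 2 ≤ TV := by
  obtain rfl : Nk = fun k => (#{i | cl i = k} : ℝ) := funext hNk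
  obtain rfl : c = fun k => rowMean U {i | cl i = k} := funext₂ hc
  subst hTV
  have pairs := sum_sum_card_mul_card_mul_sq_sum_rowMean_mul_le cl hU
  rw [sum_sum_eq_sum_add_two_nsmul_sum_lt _ fun k l => by simp only [mul_comm]] at pairs
  rw [sum_sum_sum_sq_sub_rowMean cl hU]
  set x : Fin K → ℝ := fun k => #{i | cl i = k} * ∑ j, rowMean U {i | cl i = k} j ^ 2
  have diag : ∀ k, (#{i | cl i = k} : ℝ) * #{i | cl i = k}
      * (∑ j, rowMean U {i | cl i = k} j * rowMean U {i | cl i = k} j) ^ 2 = x k ^ 2 := by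
    intro k
    simp only [x, sq]
    ring
  have sum_sq_sub_one_nonneg : 0 ≤ ∑ k, x k ^ 2 - 2 * ∑ k, x k + K :=
    calc (0 : ℝ) ≤ ∑ k, (x k - 1) ^ 2 := by positivity
      _ = _ := by simp [sub_sq, sum_add_distrib, sum_sub_distrib, mul_sum]
  simp only [diag, Fintype.card_fin, nsmul_eq_mul, Nat.cast_ofNat] at pairs
  rw [Fintype.card_fin]
  linarith

theorem stmt4 (N K : ℕ) (U : Matrix (Fin N) (Fin K) ℝ) (hU : Uᵀ * U = 1)
    (cl : Fin N → Fin K) (hcl : ∀ k, ∃ i, cl i = k)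
    (Nk : Fin K → ℝ) (hNk : ∀ k, Nk k = ((univ.filter (fun i => cl i = k)).card : ℝ))
    (c : Fin K → Fin K → ℝ)
    (hc : ∀ k j, c k j = (∑ i ∈ univ.filter (fun i => cl i = k), U i j) / Nk k)
    (TV : ℝ)
    (hTV : TV = ∑ k, ∑ i ∈ univ.filter (fun i => cl i = k), ∑ j, (U i j - c k j) ^ 2) :
    ∑ p ∈ univ.filter (fun p : Fin K × Fin K => p.1 < p.2),
      Nk p.1 * Nk p.2 * (∑ j, c p.1 j * c p.2 j) ^ 2 ≤ TV :=
  stmt4_general N K U hU cl Nk hNk c hc TV hTV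
end

section
/- Let U ∈ ℝ^{N×K} have orthonormal columns, and let Ũ ∈ ℝ^{N×K} be the block matrix whose k-th column equals (1/√N_k) on the indices in I_k and 0 elsewhere (for a partition I_1,…,I_K of {1,…,N} with |I_k| = N_k). Then ‖UU' − ŨŨ'‖_F² = 2·TV(U), where TV(U) = Σ_{k=1}^K Σ_{i∈I_k} ‖u⁽ⁱ⁾ − c⁽ᵏ⁾‖² with c⁽ᵏ⁾ = (1/N_k)Σ_{i∈I_k} u⁽ⁱ⁾ and u⁽ⁱ⁾ the i-th row of U. -/
/-!
`UUᵀ` and `ŨŨᵀ` are orthogonal projections of rank `K`, so expanding the trace gives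
`‖UUᵀ - ŨŨᵀ‖² = 2K - 2‖ŨᵀU‖²`. The `k`-th row of `ŨᵀU` is `√N_k c⁽ᵏ⁾`, hence
`‖ŨᵀU‖² = Σ_k N_k ‖c⁽ᵏ⁾‖²`, while the within-cluster decomposition of the sum of
squares gives `TV(U) = Σ_i ‖u⁽ⁱ⁾‖² - Σ_k N_k ‖c⁽ᵏ⁾‖² = K - Σ_k N_k ‖c⁽ᵏ⁾‖²`.
-/

open Matrix Finset

noncomputable def frobSq {m n : ℕ} (M : Matrix (Fin m) (Fin n) ℝ) : ℝ :=
  ∑ i, ∑ j, (M i j) ^ 2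

lemma frobSq_eq_trace_mul_transpose {m n : ℕ} (M : Matrix (Fin m) (Fin n) ℝ) :
    frobSq M = trace (M * Mᵀ) := by
  simp only [frobSq, trace, Matrix.diag, mul_apply, transpose_apply, sq]

lemma frobSq_of_transpose_mul_self_eq_one {N K : ℕ} {A : Matrix (Fin N) (Fin K) ℝ}
    (hA : Aᵀ * A = 1) : frobSq A = K := by
  rw [frobSq_eq_trace_mul_transpose, trace_mul_comm, hA, trace_one, Fintype.card_fin]

lemma trace_mul_self_of_transpose_mul_self_eq_one {N K : ℕ} {A : Matrix (Fin N) (Fin K) ℝ}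
    (hA : Aᵀ * A = 1) : trace (A * Aᵀ * (A * Aᵀ)) = K := by
  rw [Matrix.mul_assoc, trace_mul_comm, ← Matrix.mul_assoc, hA, Matrix.one_mul,
    hA, trace_one, Fintype.card_fin]

lemma frobSq_sub_of_transpose_mul_self_eq_one {N K L : ℕ} {A : Matrix (Fin N) (Fin K) ℝ}
    {B : Matrix (Fin N) (Fin L) ℝ} (hA : Aᵀ * A = 1) (hB : Bᵀ * B = 1) :
    frobSq (A * Aᵀ - B * Bᵀ) = K + L - 2 * frobSq (Bᵀ * A) := by
  have hcross : trace (A * Aᵀ * (B * Bᵀ)) = frobSq (Bᵀ * A) := by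
    rw [frobSq_eq_trace_mul_transpose, transpose_mul, transpose_transpose,
      ← Matrix.mul_assoc, trace_mul_comm]
    simp only [Matrix.mul_assoc]
  rw [frobSq_eq_trace_mul_transpose, transpose_sub, transpose_mul, transpose_mul,
    transpose_transpose, transpose_transpose, Matrix.sub_mul, Matrix.mul_sub, Matrix.mul_sub,
    trace_sub, trace_sub, trace_sub, trace_mul_comm (B * Bᵀ) (A * Aᵀ), hcross,
    trace_mul_self_of_transpose_mul_self_eq_one hA, trace_mul_self_of_transpose_mul_self_eq_one hB]
  ring

lemma Finset.sum_sub_mean_sq {ι : Type*} (s : Finset ι) (x : ι → ℝ) :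
    ∑ i ∈ s, (x i - (∑ i ∈ s, x i) / #s) ^ 2
      = ∑ i ∈ s, x i ^ 2 - #s * ((∑ i ∈ s, x i) / #s) ^ 2 := by
  rcases s.eq_empty_or_nonempty with rfl | hs
  · simp
  set m := (∑ i ∈ s, x i) / #s
  have hsum : ∑ i ∈ s, x i = #s * m := by
    rw [mul_div_cancel₀]; exact_mod_cast hs.card_ne_zero
  simp only [sub_sq, sum_add_distrib, sum_sub_distrib, ← sum_mul, ← mul_sum, hsum, sum_const,
    nsmul_eq_mul]
  ring

section Clustering

variable {ι κ : Type*} [Fintype ι] [DecidableEq κ]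

noncomputable def clusterSize (cl : ι → κ) (k : κ) : ℝ := #{i | cl i = k}

noncomputable def clusterIndicator (cl : ι → κ) : Matrix ι κ ℝ :=
  of fun i k => if cl i = k then 1 / √(clusterSize cl k) else 0

noncomputable def clusterMean {n : Type*} (cl : ι → κ) (X : Matrix ι n ℝ) (k : κ) (j : n) :
    ℝ :=
  (∑ i ∈ {i | cl i = k}, X i j) / clusterSize cl k

lemma clusterIndicator_transpose_mul_apply {n : Type*} (cl : ι → κ) (X : Matrix ι n ℝ)
    (k : κ) (j : n) :
    ((clusterIndicator cl)ᵀ * X) k j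
      = (∑ i ∈ {i | cl i = k}, X i j) / √(clusterSize cl k) := by
  simp only [mul_apply, transpose_apply, clusterIndicator, of_apply, ite_mul, zero_mul,
    sum_ite, sum_const_zero, add_zero, ← sum_div, one_div_mul_eq_div]

lemma clusterSize_nonneg (cl : ι → κ) (k : κ) : 0 ≤ clusterSize cl k :=
  Nat.cast_nonneg _

lemma clusterSize_pos {cl : ι → κ} (hcl : Function.Surjective cl) (k : κ) :
    0 < clusterSize cl k := by
  obtain ⟨i, hi⟩ := hcl k
  unfold clusterSize
  exact_mod_cast card_pos.mpr ⟨i, mem_filter.mpr ⟨mem_univ i, hi⟩⟩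

lemma clusterIndicator_transpose_mul_self {cl : ι → κ} (hcl : Function.Surjective cl) :
    (clusterIndicator cl)ᵀ * clusterIndicator cl = 1 := by
  ext k l
  have hrow : ∀ i ∈ ({i | cl i = k} : Finset ι),
      clusterIndicator cl i l = if k = l then 1 / √(clusterSize cl k) else 0 := by
    intro i hi
    rw [mem_filter] at hi
    by_cases h : k = l <;> simp [clusterIndicator, hi.2, h]
  rw [clusterIndicator_transpose_mul_apply, sum_congr rfl hrow, one_apply]
  split_ifs with h
  · have hpos := clusterSize_pos hcl k
    rw [sum_const, nsmul_eq_mul, ← clusterSize, mul_one_div, div_div,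
      Real.mul_self_sqrt hpos.le, div_self hpos.ne']
  · simp

variable [Fintype κ]

lemma sum_sum_sq_sub_clusterMean {n : Type*} [Fintype n] (cl : ι → κ) (X : Matrix ι n ℝ) :
    ∑ k, ∑ i ∈ {i | cl i = k}, ∑ j, (X i j - clusterMean cl X k j) ^ 2
      = ∑ i, ∑ j, X i j ^ 2 - ∑ k, clusterSize cl k * ∑ j, clusterMean cl X k j ^ 2 := by
  calc _ = ∑ k, (∑ i ∈ {i | cl i = k}, ∑ j, X i j ^ 2
            - clusterSize cl k * ∑ j, clusterMean cl X k j ^ 2) := by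
        refine sum_congr rfl fun k _ => ?_
        rw [sum_comm, sum_comm (f := fun i j => X i j ^ 2), mul_sum, ← sum_sub_distrib]
        exact sum_congr rfl fun j _ => sum_sub_mean_sq _ _
    _ = _ := by rw [sum_sub_distrib, sum_fiberwise]

end Clustering

lemma frobSq_clusterIndicator_transpose_mul {N K n : ℕ} (cl : Fin N → Fin K)
    (X : Matrix (Fin N) (Fin n) ℝ) :
    frobSq ((clusterIndicator cl)ᵀ * X)
      = ∑ k, clusterSize cl k * ∑ j, clusterMean cl X k j ^ 2 := by
  simp only [frobSq, mul_sum]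
  refine sum_congr rfl fun k _ => sum_congr rfl fun j _ => ?_
  rw [clusterIndicator_transpose_mul_apply, clusterMean, div_pow, div_pow,
    Real.sq_sqrt (clusterSize_nonneg cl k)]
  -- an empty cluster makes both sides vanish through `x / 0 = 0`
  rcases eq_or_ne (clusterSize cl k) 0 with h | h
  · simp [h]
  · field_simp

theorem stmt5 (N K : ℕ) (U : Matrix (Fin N) (Fin K) ℝ) (hU : Uᵀ * U = 1)
    (cl : Fin N → Fin K) (hcl : ∀ k, ∃ i, cl i = k)
    (Nk : Fin K → ℝ) (hNk : ∀ k, Nk k = ((univ.filter (fun i => cl i = k)).card : ℝ))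
    (Ut : Matrix (Fin N) (Fin K) ℝ)
    (hUt : ∀ i k, Ut i k = if cl i = k then 1 / Real.sqrt (Nk k) else 0)
    (c : Fin K → Fin K → ℝ)
    (hc : ∀ k j, c k j = (∑ i ∈ univ.filter (fun i => cl i = k), U i j) / Nk k)
    (TV : ℝ)
    (hTV : TV = ∑ k, ∑ i ∈ univ.filter (fun i => cl i = k), ∑ j, (U i j - c k j) ^ 2) :
    frobSq (U * Uᵀ - Ut * Utᵀ) = 2 * TV := by
  obtain rfl : Nk = clusterSize cl := funext hNk
  obtain rfl : Ut = clusterIndicator cl := Matrix.ext hUt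
  obtain rfl : c = clusterMean cl U := funext fun k => funext (hc k)
  have hK : ∑ i, ∑ j, U i j ^ 2 = K := frobSq_of_transpose_mul_self_eq_one hU
  rw [hTV, sum_sum_sq_sub_clusterMean, hK,
    frobSq_sub_of_transpose_mul_self_eq_one hU (clusterIndicator_transpose_mul_self hcl),
    frobSq_clusterIndicator_transpose_mul]
  ring
end

section
/- Let μ₁ be the uniform (normalized arclength) measure on the segment L1 = {(x,0) : 0 ≤ x ≤ L} and μ₂ the uniform measure on L2 = {(0,y) : 0 ≤ y ≤ L}, for fixed L > 0. For any three points p₁ = (x₁,0), p₂ = (x₂,0) ∈ L1 and q = (0,y) ∈ L2 with y > 0, the polar curvature satisfies c_p(p₁,p₂,q) ≥ √2·y, where c_p(z₁,z₂,z₃) = diam{z₁,z₂,z₃}·√(sin²∠z₁ + sin²∠z₂ + sin²∠z₃) with ∠z_i the angle of the triangle at vertex z_i. -/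
noncomputable def dist2 (a b : ℝ × ℝ) : ℝ :=
  Real.sqrt ((a.1 - b.1) ^ 2 + (a.2 - b.2) ^ 2)

/-- sine of the interior angle at vertex `z` of the triangle `z a b`. -/
noncomputable def sinAngle (z a b : ℝ × ℝ) : ℝ :=
  |(a.1 - z.1) * (b.2 - z.2) - (a.2 - z.2) * (b.1 - z.1)| / (dist2 z a * dist2 z b)

noncomputable def diam3 (a b c : ℝ × ℝ) : ℝ :=
  max (dist2 a b) (max (dist2 a c) (dist2 b c))

/-- polar curvature of three points in the plane. -/
noncomputable def polarCurv (a b c : ℝ × ℝ) : ℝ :=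
  diam3 a b c *
    Real.sqrt (sinAngle a b c ^ 2 + sinAngle b a c ^ 2 + sinAngle c a b ^ 2)

/-! The two sines at the base vertices `pᵢ` are `y / |pᵢ q|`, and the diameter dominates both
`|pᵢ q|`, so `diam² · (sin²∠p₁ + sin²∠p₂) ≥ y² + y²`. -/

lemma dist2_of_snd_eq {a b : ℝ × ℝ} (h : a.2 = b.2) : dist2 a b = |a.1 - b.1| := by
  rw [dist2, h, sub_self, zero_pow two_ne_zero, add_zero, Real.sqrt_sq_eq_abs]

lemma abs_snd_sub_le_dist2 (a b : ℝ × ℝ) : |a.2 - b.2| ≤ dist2 a b := by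
  rw [dist2, ← Real.sqrt_sq_eq_abs]
  exact Real.sqrt_le_sqrt (le_add_of_nonneg_left (sq_nonneg _))

lemma dist2_le_diam3_left (a b c : ℝ × ℝ) : dist2 a c ≤ diam3 a b c :=
  (le_max_left _ _).trans (le_max_right _ _)

lemma dist2_le_diam3_right (a b c : ℝ × ℝ) : dist2 b c ≤ diam3 a b c :=
  (le_max_right _ _).trans (le_max_right _ _)

lemma sinAngle_of_snd_eq {z a : ℝ × ℝ} (h : a.2 = z.2) (hne : a.1 ≠ z.1) (b : ℝ × ℝ) :
    sinAngle z a b = |b.2 - z.2| / dist2 z b := by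
  have hza : |a.1 - z.1| ≠ 0 := abs_ne_zero.mpr (sub_ne_zero.mpr hne)
  rw [sinAngle, h, sub_self, zero_mul, sub_zero, abs_mul, dist2_of_snd_eq h.symm,
    abs_sub_comm z.1, mul_div_mul_left _ _ hza]

lemma sqrt_two_mul_le_mul_sqrt {h r₁ r₂ M : ℝ} (hh : 0 ≤ h) (hr₁ : 0 < r₁) (hr₂ : 0 < r₂)
    (hM₁ : r₁ ≤ M) (hM₂ : r₂ ≤ M) (c : ℝ) :
    √2 * h ≤ M * √((h / r₁) ^ 2 + (h / r₂) ^ 2 + c ^ 2) := by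
  have hM : 0 ≤ M := hr₁.le.trans hM₁
  have hle : ∀ r, 0 < r → r ≤ M → h ≤ M * (h / r) := fun r hr hrM => by
    rw [← mul_div_assoc, le_div_iff₀ hr, mul_comm]
    exact mul_le_mul_of_nonneg_right hrM hh
  have h₁ := mul_self_le_mul_self hh (hle r₁ hr₁ hM₁)
  have h₂ := mul_self_le_mul_self hh (hle r₂ hr₂ hM₂)
  calc √2 * h = √(2 * h ^ 2) := by rw [Real.sqrt_mul zero_le_two, Real.sqrt_sq hh]
    _ ≤ √(M ^ 2 * ((h / r₁) ^ 2 + (h / r₂) ^ 2 + c ^ 2)) :=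
        Real.sqrt_le_sqrt (by nlinarith [sq_nonneg (M * c)])
    _ = M * √((h / r₁) ^ 2 + (h / r₂) ^ 2 + c ^ 2) := by
        rw [Real.sqrt_mul (sq_nonneg M), Real.sqrt_sq hM]

theorem stmt12_general (x₁ x₂ y : ℝ) (hne : x₁ ≠ x₂)
    (hy : 0 < y) :
    Real.sqrt 2 * y ≤ polarCurv (x₁, 0) (x₂, 0) (0, y) := by
  have hheight : ∀ x : ℝ, 0 < dist2 (x, 0) (0, y) := fun x =>
    hy.trans_le (by simpa [abs_of_pos hy] using abs_snd_sub_le_dist2 (x, 0) (0, y))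
  rw [polarCurv, sinAngle_of_snd_eq (z := (x₁, 0)) (a := (x₂, 0)) rfl hne.symm,
    sinAngle_of_snd_eq (z := (x₂, 0)) (a := (x₁, 0)) rfl hne]
  simp only [sub_zero, abs_of_pos hy]
  exact sqrt_two_mul_le_mul_sqrt hy.le (hheight x₁) (hheight x₂)
    (dist2_le_diam3_left _ _ _) (dist2_le_diam3_right _ _ _) _

theorem stmt12 (x₁ x₂ y : ℝ) (hx₁ : 0 ≤ x₁) (hx₂ : 0 ≤ x₂) (hne : x₁ ≠ x₂)
    (hy : 0 < y) :
    Real.sqrt 2 * y ≤ polarCurv (x₁, 0) (x₂, 0) (0, y) :=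
  stmt12_general x₁ x₂ y hne hy
end
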